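/- Let m ≥ 2 and let k, r be integers with 1 ≤ k ≤ r < 2k. Then the number of paths of length t = 2k in the perfect rooted m-ary tree of depth r equals m^(2k−1) · ( (1/2)(m+1) · (m^(r−k+1) − 1)/(m−1) − (r−k+1) ). -/

import Mathlib

open SimpleGraph Finset

/-- `IsPerfectRootedMary m r H ρ` says that `H` is the perfect rooted `m`-ary tree of
depth `r` with root `ρ`: a tree whose root `ρ` has degree `m`, in which every other
vertex has degree `1` or `m + 1`, whose maximum distance from `ρ` to a vertex is `r`,
and in which every degree-`1` vertex is at distance exactly `r` from `ρ`.
(For `r = 0` the root-degree condition is dropped, so that the one-vertex tree is the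
perfect rooted tree of depth `0`.) -/
def IsPerfectRootedMary (m r : ℕ) {W : Type} [Fintype W] (H : SimpleGraph W)
    [DecidableRel H.Adj] (ρ : W) : Prop :=
  H.IsTree ∧
    (0 < r → H.degree ρ = m) ∧
    (∀ v : W, v ≠ ρ → H.degree v = 1 ∨ H.degree v = m + 1) ∧
    (∀ v : W, H.dist ρ v ≤ r) ∧
    (∃ v : W, H.dist ρ v = r) ∧
    (∀ v : W, H.degree v = 1 → H.dist ρ v = r)

/-- The number of paths of length `t` in `H`, i.e. the number of unordered pairs of
vertices at distance exactly `t` from each other. -/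
noncomputable def pathCount {W : Type} [Fintype W] [DecidableEq W] (H : SimpleGraph W) (t : ℕ) : ℕ :=
  (Finset.univ.filter fun p : Sym2 W => ∃ u v : W, p = s(u, v) ∧ H.dist u v = t).card

/-!
Let `t = 2k`. Since `t > r`, no vertex lies `t` levels below another, so a path of length `t`
climbs `a ≥ 1` levels from one end to its top vertex `w` and then descends `t - a ≥ 1` levels,
through a different child of `w`, to the other end. If `w` has depth `d` this is possible exactly
when `d + max a (t - a) ≤ r`, and then there are `(m² - m) m^(t-2)` such ordered pairs of ends.
The admissible `a` form an interval with `2 (r - d) + 1 - t` elements and there are `m^d` vertices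
at depth `d`, so twice the number of paths is `(m² - m) m^(t-2) ∑_{d ≤ r-k} m^d (2 (r - k - d) + 1)`,
which sums to the stated closed form.
-/

namespace SimpleGraph

variable {V : Type*} {G : SimpleGraph V} {ρ : V}

open Classical in
/-- The neighbour of `v` one step closer to `ρ`; vertices without one (in a tree, only `ρ`)
are their own parent. -/
noncomputable def parent (G : SimpleGraph V) (ρ v : V) : V :=
  if h : ∃ x, G.Adj v x ∧ G.dist ρ x + 1 = G.dist ρ v then h.choose else v

lemma dist_parent_le_one (G : SimpleGraph V) (ρ v : V) : G.dist v (G.parent ρ v) ≤ 1 := by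
  unfold parent
  split_ifs with h
  · exact (dist_eq_one_iff_adj.2 h.choose_spec.1).le
  · simp

lemma Connected.exists_adj_dist_add_one_eq (hc : G.Connected) {v : V} (hv : v ≠ ρ) :
    ∃ x, G.Adj v x ∧ G.dist ρ x + 1 = G.dist ρ v := by
  obtain ⟨p, -, hp⟩ := hc.exists_path_of_dist v ρ
  cases p with
  | nil => exact absurd rfl hv
  | @cons _ x _ h q =>
    refine ⟨x, h, le_antisymm ?_ ?_⟩
    · rw [dist_comm (u := ρ) (v := v), ← hp, Walk.length_cons, dist_comm]
      exact Nat.succ_le_succ (dist_le q)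
    · have := hc.dist_triangle (u := ρ) (v := x) (w := v)
      rwa [dist_eq_one_iff_adj.2 h.symm] at this

lemma IsTree.eq_of_adj_of_dist_add_one_eq (hT : G.IsTree) {v x y : V}
    (hx : G.Adj v x) (hdx : G.dist ρ x + 1 = G.dist ρ v)
    (hy : G.Adj v y) (hdy : G.dist ρ y + 1 = G.dist ρ v) : x = y := by
  classical
  obtain ⟨p, hp, -⟩ := hT.connected.exists_path_of_dist ρ v
  -- every such `z` lies on the path from `ρ` to `v`, hence is its penultimate vertex
  have hpen : ∀ z, G.Adj v z → G.dist ρ z + 1 = G.dist ρ v → z = p.penultimate := by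
    intro z hz hdz
    refine hT.isAcyclic.eq_penultimate_of_adj_end hp hz ?_
    by_contra hzp
    obtain ⟨q, hq, hql⟩ := hT.connected.exists_path_of_dist ρ z
    have hvq := mt (hT.isAcyclic.mem_support_of_ne_mem_support_of_adj_of_isPath hp hq hz) hzp
    have := (dist_le _).trans (q.length_takeUntil_le_length (not_not.1 hvq))
    omega
  rw [hpen x hx hdx, hpen y hy hdy]

lemma Connected.parent_spec (hc : G.Connected) {v : V} (hv : v ≠ ρ) :
    G.Adj v (G.parent ρ v) ∧ G.dist ρ (G.parent ρ v) + 1 = G.dist ρ v := by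
  have h := hc.exists_adj_dist_add_one_eq hv
  rw [parent, dif_pos h]
  exact h.choose_spec

lemma IsTree.parent_eq_of_adj (hT : G.IsTree) {v x : V} (h : G.Adj v x)
    (hd : G.dist ρ x + 1 = G.dist ρ v) : G.parent ρ v = x := by
  have hv : v ≠ ρ := by rintro rfl; simp at hd
  obtain ⟨hadj, hdist⟩ := hT.connected.parent_spec hv
  exact hT.eq_of_adj_of_dist_add_one_eq hadj hdist h hd

lemma Connected.dist_parent_iterate_add (hc : G.Connected) {j : ℕ} {v : V}
    (hj : j ≤ G.dist ρ v) : G.dist ρ ((G.parent ρ)^[j] v) + j = G.dist ρ v := by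
  induction j generalizing v with
  | zero => rfl
  | succ j ih =>
    have hv : v ≠ ρ := by rintro rfl; simp at hj
    have hpar := (hc.parent_spec hv).2
    rw [Function.iterate_succ_apply]
    have := ih (v := G.parent ρ v) (by omega)
    omega

lemma Connected.dist_parent_iterate_le (hc : G.Connected) (j : ℕ) (v : V) :
    G.dist v ((G.parent ρ)^[j] v) ≤ j := by
  induction j with
  | zero => simp
  | succ j ih =>
    rw [Function.iterate_succ_apply']
    have := hc.dist_triangle (u := v) (v := (G.parent ρ)^[j] v)
      (w := G.parent ρ ((G.parent ρ)^[j] v))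
    have := G.dist_parent_le_one ρ ((G.parent ρ)^[j] v)
    omega

lemma Connected.dist_le_of_parent_iterate_eq (hc : G.Connected) {u v : V} {a b : ℕ}
    (h : (G.parent ρ)^[a] u = (G.parent ρ)^[b] v) : G.dist u v ≤ a + b :=
  calc G.dist u v
      ≤ G.dist u ((G.parent ρ)^[a] u) + G.dist ((G.parent ρ)^[a] u) v := hc.dist_triangle
    _ = G.dist u ((G.parent ρ)^[a] u) + G.dist v ((G.parent ρ)^[b] v) := by
        rw [h, dist_comm (u := (G.parent ρ)^[b] v) (v := v)]
    _ ≤ a + b := add_le_add (hc.dist_parent_iterate_le a u) (hc.dist_parent_iterate_le b v)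

lemma IsTree.exists_parent_iterate_eq_of_walk (hT : G.IsTree) {u v : V} (p : G.Walk u v) :
    ∃ a b, a + b ≤ p.length ∧ (G.parent ρ)^[a] u = (G.parent ρ)^[b] v ∧
      G.dist ρ u + b = G.dist ρ v + a := by
  induction p with
  | nil => exact ⟨0, 0, by simp⟩
  | @cons u u' v h q ih =>
    obtain ⟨a, b, hab, hmeet, hd⟩ := ih
    rw [Walk.length_cons]
    rcases hT.dist_eq_dist_add_one_of_adj ρ h with hup | hdown
    · refine ⟨a + 1, b, by omega, ?_, by omega⟩
      rwa [Function.iterate_succ_apply, hT.parent_eq_of_adj h hup.symm]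
    · have hpar : G.parent ρ u' = u := hT.parent_eq_of_adj h.symm hdown.symm
      rcases a with _ | a
      · rw [Function.iterate_zero_apply] at hmeet
        refine ⟨0, b + 1, by omega, ?_, by omega⟩
        rw [Function.iterate_succ_apply', ← hmeet, hpar]
        rfl
      · refine ⟨a, b, by omega, ?_, by omega⟩
        rwa [Function.iterate_succ_apply, hpar] at hmeet

lemma IsTree.exists_parent_iterate_eq (hT : G.IsTree) (u v : V) :
    ∃ a b, G.dist u v = a + b ∧ (G.parent ρ)^[a] u = (G.parent ρ)^[b] v ∧
      G.dist ρ u + b = G.dist ρ v + a := by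
  obtain ⟨p, -, hp⟩ := hT.connected.exists_path_of_dist u v
  obtain ⟨a, b, hab, hmeet, hd⟩ := hT.exists_parent_iterate_eq_of_walk (ρ := ρ) p
  exact ⟨a, b, le_antisymm (hT.connected.dist_le_of_parent_iterate_eq hmeet) (hp ▸ hab),
    hmeet, hd⟩

lemma IsTree.dist_eq_add_of_parent_iterate_ne (hT : G.IsTree) {u v : V} {a b : ℕ}
    (ha : 1 ≤ a) (hb : 1 ≤ b) (hmeet : (G.parent ρ)^[a] u = (G.parent ρ)^[b] v)
    (hd : G.dist ρ u + b = G.dist ρ v + a)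
    (hne : (G.parent ρ)^[a - 1] u ≠ (G.parent ρ)^[b - 1] v) : G.dist u v = a + b := by
  obtain ⟨a', b', hdist, hmeet', hd'⟩ := hT.exists_parent_iterate_eq (ρ := ρ) u v
  have hle := hT.connected.dist_le_of_parent_iterate_eq hmeet
  -- a shorter geodesic would turn below height `a`, forcing the `(a - 1)`-st ancestors to agree
  by_contra hlt
  obtain ⟨c, hc⟩ : ∃ c, a - 1 = a' + c := ⟨a - 1 - a', by omega⟩
  apply hne
  rw [hc, show b - 1 = b' + c by omega, add_comm a', add_comm b', Function.iterate_add_apply,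
    Function.iterate_add_apply, hmeet']

lemma Connected.parent_iterate_dist (hc : G.Connected) (v : V) :
    (G.parent ρ)^[G.dist ρ v] v = ρ := by
  have := hc.dist_parent_iterate_add (ρ := ρ) (le_refl (G.dist ρ v))
  exact (hc.dist_eq_zero_iff.1 (by omega)).symm

section Finite

variable [Fintype V] [DecidableEq V]

variable (G ρ) in
noncomputable def descendants (w : V) (a : ℕ) : Finset V :=
  {u | (G.parent ρ)^[a] u = w ∧ G.dist ρ u = G.dist ρ w + a}

lemma mem_descendants {w u : V} {a : ℕ} :
    u ∈ G.descendants ρ w a ↔ (G.parent ρ)^[a] u = w ∧ G.dist ρ u = G.dist ρ w + a := by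
  simp [descendants]

lemma descendants_zero (w : V) : G.descendants ρ w 0 = {w} := by
  ext u
  simp only [mem_descendants, Function.iterate_zero_apply, add_zero, mem_singleton]
  exact ⟨And.left, by rintro rfl; simp⟩

lemma Connected.mem_descendants_add (hc : G.Connected) {w u : V} {i j : ℕ} :
    u ∈ G.descendants ρ w (i + j) ↔
      (G.parent ρ)^[j] u ∈ G.descendants ρ w i ∧
        u ∈ G.descendants ρ ((G.parent ρ)^[j] u) j := by
  simp only [mem_descendants, true_and, ← Function.iterate_add_apply]
  constructor
  · rintro ⟨hw, hd⟩
    have := hc.dist_parent_iterate_add (ρ := ρ) (j := j) (v := u) (by omega)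
    exact ⟨⟨hw, by omega⟩, by omega⟩
  · rintro ⟨⟨hw, hd⟩, hd'⟩
    exact ⟨hw, by omega⟩

lemma Connected.descendants_add (hc : G.Connected) (w : V) (i j : ℕ) :
    G.descendants ρ w (i + j) = (G.descendants ρ w i).biUnion (G.descendants ρ · j) := by
  ext u
  rw [hc.mem_descendants_add, mem_biUnion]
  refine ⟨fun h => ⟨_, h⟩, ?_⟩
  rintro ⟨x, hx, hux⟩
  rw [(mem_descendants.1 hux).1]
  exact ⟨hx, hux⟩

lemma pairwiseDisjoint_descendants (s : Set V) (j : ℕ) :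
    s.PairwiseDisjoint (G.descendants ρ · j) := by
  intro x _ y _ hxy
  rw [Function.onFun, Finset.disjoint_left]
  intro u hx hy
  exact hxy ((mem_descendants.1 hx).1.symm.trans (mem_descendants.1 hy).1)

lemma Connected.filter_dist_eq_eq_descendants (hc : G.Connected) (d : ℕ) :
    ({u | G.dist ρ u = d} : Finset V) = G.descendants ρ ρ d := by
  ext u
  simp only [mem_filter, mem_univ, true_and, mem_descendants, dist_self, zero_add]
  exact ⟨fun h => ⟨h ▸ hc.parent_iterate_dist u, h⟩, And.right⟩

lemma IsTree.mem_descendants_one (hT : G.IsTree) {w x : V} :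
    x ∈ G.descendants ρ w 1 ↔ G.Adj w x ∧ G.dist ρ x = G.dist ρ w + 1 := by
  rw [mem_descendants, Function.iterate_one]
  refine ⟨fun ⟨hx, hd⟩ => ⟨?_, hd⟩,
    fun ⟨hadj, hd⟩ => ⟨hT.parent_eq_of_adj hadj.symm hd.symm, hd⟩⟩
  have hxρ : x ≠ ρ := by rintro rfl; simp at hd
  exact hx ▸ (hT.connected.parent_spec hxρ).1.symm


variable (G ρ) in
/-- Ordered pairs `(u, v)` whose connecting path turns at `w`: `u` and `v` lie `a` and `b` levels
below `w`, under distinct children of `w`. -/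
noncomputable def branchPairs (w : V) (a b : ℕ) : Finset (V × V) :=
  (G.descendants ρ w a ×ˢ G.descendants ρ w b).filter fun p =>
    (G.parent ρ)^[a - 1] p.1 ≠ (G.parent ρ)^[b - 1] p.2

lemma Connected.branchPairs_eq_biUnion (hc : G.Connected) (w : V) {a b : ℕ} (ha : 1 ≤ a)
    (hb : 1 ≤ b) :
    G.branchPairs ρ w a b = (G.descendants ρ w 1).offDiag.biUnion
      fun q => G.descendants ρ q.1 (a - 1) ×ˢ G.descendants ρ q.2 (b - 1) := by
  obtain ⟨a, rfl⟩ := Nat.exists_eq_add_of_le ha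
  obtain ⟨b, rfl⟩ := Nat.exists_eq_add_of_le hb
  ext ⟨u, v⟩
  simp only [branchPairs, mem_filter, mem_product, mem_biUnion, mem_offDiag, Prod.exists,
    hc.mem_descendants_add, add_tsub_cancel_left]
  constructor
  · rintro ⟨⟨⟨hu₁, hu⟩, hv₁, hv⟩, hne⟩
    exact ⟨_, _, ⟨hu₁, hv₁, hne⟩, hu, hv⟩
  · rintro ⟨c, c', ⟨hc₁, hc'₁, hne⟩, hu, hv⟩
    rw [(mem_descendants.1 hu).1, (mem_descendants.1 hv).1]
    exact ⟨⟨⟨hc₁, hu⟩, hc'₁, hv⟩, hne⟩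

lemma pairwiseDisjoint_branchPairs (t : ℕ) :
    ((univ ×ˢ Icc 1 (t - 1) : Finset (V × ℕ)) : Set (V × ℕ)).PairwiseDisjoint
      fun q => G.branchPairs ρ q.1 q.2 (t - q.2) := by
  rintro ⟨w, a⟩ hq ⟨w', a'⟩ hq' hne
  simp only [coe_product, coe_univ, coe_Icc, Set.mem_prod, Set.mem_univ, Set.mem_Icc,
    true_and] at hq hq'
  rw [Function.onFun, Finset.disjoint_left]
  rintro ⟨u, v⟩ h h'
  simp only [branchPairs, mem_filter, mem_product, mem_descendants] at h h'
  have ha : a = a' := by omega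
  subst ha
  exact hne (Prod.ext (h.1.1.1.symm.trans h'.1.1.1) rfl)

lemma IsTree.filter_dist_eq_eq_biUnion (hT : G.IsTree) {r t : ℕ}
    (hdepth : ∀ v, G.dist ρ v ≤ r) (hrt : r < t) :
    ({p : V × V | G.dist p.1 p.2 = t} : Finset (V × V)) =
      (univ ×ˢ Icc 1 (t - 1)).biUnion fun q => G.branchPairs ρ q.1 q.2 (t - q.2) := by
  ext ⟨u, v⟩
  simp only [mem_filter, mem_univ, true_and, mem_biUnion, mem_product, mem_Icc, Prod.exists,
    branchPairs, mem_descendants]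
  have hu := hdepth u
  have hv := hdepth v
  constructor
  · intro huv
    obtain ⟨a, b, hab, hmeet, hd⟩ := hT.exists_parent_iterate_eq (ρ := ρ) u v
    have htri := hT.connected.dist_triangle (u := u) (v := ρ) (w := v)
    rw [dist_comm (u := u) (v := ρ)] at htri
    obtain rfl : b = t - a := by omega
    have hau := hT.connected.dist_parent_iterate_add (ρ := ρ) (j := a) (v := u) (by omega)
    have hbv := hT.connected.dist_parent_iterate_add (ρ := ρ) (j := t - a) (v := v) (by omega)
    have hne : (G.parent ρ)^[a - 1] u ≠ (G.parent ρ)^[t - a - 1] v := fun h => by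
      have := hT.connected.dist_le_of_parent_iterate_eq h
      omega
    exact ⟨_, a, ⟨by omega, by omega⟩, ⟨⟨rfl, by omega⟩, hmeet.symm, by omega⟩, hne⟩
  · rintro ⟨w, a, ⟨ha, hat⟩, ⟨⟨hu, hdu⟩, hv, hdv⟩, hne⟩
    have := hT.dist_eq_add_of_parent_iterate_ne (by omega) (by omega) (hu.trans hv.symm)
      (by omega) hne
    omega

end Finite

end SimpleGraph

lemma two_mul_pathCount {V : Type} [Fintype V] [DecidableEq V] (G : SimpleGraph V) {t : ℕ}
    (ht : t ≠ 0) :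
    2 * pathCount G t = #({p : V × V | G.dist p.1 p.2 = t} : Finset (V × V)) := by
  set s : Finset (V × V) := {p | G.dist p.1 p.2 = t}
  have himage : ({z : Sym2 V | ∃ u v, z = s(u, v) ∧ G.dist u v = t} : Finset (Sym2 V)) =
      s.image Sym2.mk.uncurry := by
    ext z
    simp only [mem_filter, mem_univ, true_and, mem_image, Prod.exists, Function.uncurry_apply_pair,
      s]
    exact ⟨fun ⟨u, v, hz, hd⟩ => ⟨u, v, hd, hz.symm⟩,
      fun ⟨u, v, hd, hz⟩ => ⟨u, v, hz.symm, hd⟩⟩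
  rw [pathCount, himage, card_eq_sum_card_image Sym2.mk.uncurry s, mul_comm,
    sum_const_nat (Sym2.ind ?_)]
  intro u v huv
  obtain ⟨⟨x, y⟩, hxy, hz⟩ := mem_image.1 huv
  have hd : G.dist u v = t := by
    rcases Sym2.eq_iff.1 hz with ⟨rfl, rfl⟩ | ⟨rfl, rfl⟩
    · exact (mem_filter.1 hxy).2
    · exact dist_comm.trans (mem_filter.1 hxy).2
  have hne : u ≠ v := by rintro rfl; simp [ht.symm] at hd
  have hfiber : {p ∈ s | Sym2.mk.uncurry p = s(u, v)} = {(u, v), (v, u)} := by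
    ext ⟨x, y⟩
    simp only [mem_filter, mem_univ, true_and, Function.uncurry_apply_pair, Sym2.eq_iff,
      mem_insert, mem_singleton, Prod.mk.injEq, s]
    constructor
    · exact And.right
    · rintro (⟨rfl, rfl⟩ | ⟨rfl, rfl⟩)
      exacts [⟨hd, Or.inl ⟨rfl, rfl⟩⟩, ⟨dist_comm.trans hd, Or.inr ⟨rfl, rfl⟩⟩]
  rw [hfiber, card_pair (by simp [hne])]

lemma card_filter_Icc_add_le {r t d : ℕ} (hrt : r < t) :
    #{a ∈ Icc 1 (t - 1) | d + a ≤ r ∧ d + (t - a) ≤ r} = 2 * (r - d) + 1 - t := by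
  have : {a ∈ Icc 1 (t - 1) | d + a ≤ r ∧ d + (t - a) ≤ r} = Icc (t + d - r) (r - d) := by
    ext a
    simp only [mem_filter, mem_Icc]
    omega
  rw [this, Nat.card_Icc]
  omega

namespace IsPerfectRootedMary

variable {V : Type} [Fintype V] [DecidableEq V] {G : SimpleGraph V} [DecidableRel G.Adj] {ρ : V}
  {m r : ℕ}

lemma card_descendants_one (hG : IsPerfectRootedMary m r G ρ) {w : V} (hw : G.dist ρ w < r) :
    #(G.descendants ρ w 1) = m := by
  obtain ⟨hT, hroot, hdeg, -, -, hleaf⟩ := hG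
  by_cases hwρ : w = ρ
  · subst hwρ
    have : G.descendants w w 1 = G.neighborFinset w := by
      ext x
      rw [hT.mem_descendants_one, mem_neighborFinset, dist_self, zero_add, dist_eq_one_iff_adj,
        and_self]
    rw [this, card_neighborFinset_eq_degree, hroot (by omega)]
  · have hdeg' : G.degree w = m + 1 :=
      (hdeg w hwρ).resolve_left fun h => by have := hleaf w h; omega
    obtain ⟨hadj, hpar⟩ := hT.connected.parent_spec hwρ
    have hnbr : G.neighborFinset w = insert (G.parent ρ w) (G.descendants ρ w 1) := by
      ext x
      rw [mem_insert, hT.mem_descendants_one, mem_neighborFinset]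
      constructor
      · intro h
        rcases hT.dist_eq_dist_add_one_of_adj ρ h with hd | hd
        · exact Or.inl (hT.parent_eq_of_adj h hd.symm).symm
        · exact Or.inr ⟨h, hd⟩
      · rintro (rfl | ⟨h, -⟩)
        exacts [hadj, h]
    have hnot : G.parent ρ w ∉ G.descendants ρ w 1 := by
      rw [hT.mem_descendants_one]
      exact fun h => by omega
    rw [← add_left_inj 1, ← hdeg', ← card_neighborFinset_eq_degree, hnbr,
      card_insert_of_notMem hnot]

lemma card_descendants (hG : IsPerfectRootedMary m r G ρ) {w : V} {a : ℕ}
    (h : G.dist ρ w + a ≤ r) : #(G.descendants ρ w a) = m ^ a := by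
  induction a with
  | zero => simp [descendants_zero]
  | succ a ih =>
    rw [hG.1.connected.descendants_add, card_biUnion (pairwiseDisjoint_descendants _ _),
      sum_const_nat fun x hx => hG.card_descendants_one (by rw [(mem_descendants.1 hx).2]; omega),
      ih (by omega), pow_succ]

lemma card_filter_dist_root_eq (hG : IsPerfectRootedMary m r G ρ) {d : ℕ} (hd : d ≤ r) :
    #({u | G.dist ρ u = d} : Finset V) = m ^ d := by
  rw [hG.1.connected.filter_dist_eq_eq_descendants, hG.card_descendants (by simpa)]

lemma sum_comp_dist (hG : IsPerfectRootedMary m r G ρ) (f : ℕ → ℕ) :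
    ∑ u, f (G.dist ρ u) = ∑ d ∈ range (r + 1), m ^ d * f d := by
  rw [← sum_fiberwise_of_maps_to' (t := range (r + 1)) (g := G.dist ρ)
    (fun u _ => mem_range.2 (Nat.lt_succ_of_le (hG.2.2.2.1 u)))]
  refine sum_congr rfl fun d hd => ?_
  rw [sum_const, smul_eq_mul, hG.card_filter_dist_root_eq (Nat.le_of_lt_succ (mem_range.1 hd))]

lemma card_branchPairs (hG : IsPerfectRootedMary m r G ρ) (w : V) {a b : ℕ} (ha : 1 ≤ a)
    (hb : 1 ≤ b) :
    #(G.branchPairs ρ w a b) =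
      if G.dist ρ w + a ≤ r ∧ G.dist ρ w + b ≤ r then (m * m - m) * m ^ (a + b - 2)
      else 0 := by
  split_ifs with h
  · have hdisj : ((G.descendants ρ w 1).offDiag : Set (V × V)).PairwiseDisjoint
        fun q => G.descendants ρ q.1 (a - 1) ×ˢ G.descendants ρ q.2 (b - 1) := by
      intro q _ q' _ hne
      rw [Function.onFun, Finset.disjoint_left]
      rintro ⟨u, v⟩ hq hq'
      simp only [mem_product, mem_descendants] at hq hq'
      exact hne (Prod.ext (hq.1.1.symm.trans hq'.1.1) (hq.2.1.symm.trans hq'.2.1))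
    have hcard : ∀ q ∈ (G.descendants ρ w 1).offDiag,
        #(G.descendants ρ q.1 (a - 1) ×ˢ G.descendants ρ q.2 (b - 1)) =
          m ^ (a - 1) * m ^ (b - 1) := by
      rintro ⟨c, c'⟩ hq
      simp only [mem_offDiag, mem_descendants] at hq
      dsimp only
      rw [card_product, hG.card_descendants (by omega), hG.card_descendants (by omega)]
    rw [hG.1.connected.branchPairs_eq_biUnion w ha hb, card_biUnion hdisj, sum_const_nat hcard,
      offDiag_card, hG.card_descendants_one (by omega), ← pow_add]
    congr 2
    omega
  · refine card_eq_zero.2 (eq_empty_of_forall_notMem fun p hp => h ?_)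
    simp only [branchPairs, mem_filter, mem_product, mem_descendants] at hp
    have := hG.2.2.2.1 p.1
    have := hG.2.2.2.1 p.2
    omega

lemma card_filter_dist_eq (hG : IsPerfectRootedMary m r G ρ) {t : ℕ} (hrt : r < t) :
    #({p : V × V | G.dist p.1 p.2 = t} : Finset (V × V)) =
      (m * m - m) * m ^ (t - 2) * ∑ d ∈ range (r + 1), m ^ d * (2 * (r - d) + 1 - t) := by
  set C := (m * m - m) * m ^ (t - 2)
  have hturn : ∀ w, ∑ a ∈ Icc 1 (t - 1), #(G.branchPairs ρ w a (t - a)) =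
      C * (2 * (r - G.dist ρ w) + 1 - t) := fun w => by
    calc ∑ a ∈ Icc 1 (t - 1), #(G.branchPairs ρ w a (t - a))
        = ∑ a ∈ Icc 1 (t - 1),
            if G.dist ρ w + a ≤ r ∧ G.dist ρ w + (t - a) ≤ r then C else 0 := by
          refine sum_congr rfl fun a ha => ?_
          rw [mem_Icc] at ha
          rw [hG.card_branchPairs w ha.1 (by omega), show a + (t - a) - 2 = t - 2 by omega]
      _ = _ := by rw [← sum_filter, sum_const, smul_eq_mul, mul_comm, card_filter_Icc_add_le hrt]
  rw [hG.1.filter_dist_eq_eq_biUnion hG.2.2.2.1 hrt, card_biUnion (pairwiseDisjoint_branchPairs t),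
    sum_product, sum_congr rfl fun w _ => hturn w, ← mul_sum,
    hG.sum_comp_dist fun d => 2 * (r - d) + 1 - t]

end IsPerfectRootedMary

lemma sub_one_sq_mul_sum_range_pow_mul_odd {R : Type*} [CommRing R] (x : R) (s : ℕ) :
    (x - 1) ^ 2 * ∑ d ∈ range (s + 1), x ^ d * (2 * ((s - d : ℕ) : R) + 1) =
      (x + 1) * (x ^ (s + 1) - 1) - 2 * (s + 1) * (x - 1) := by
  induction s with
  | zero =>
    simp only [zero_add, range_one, sum_singleton, pow_zero, pow_one, Nat.cast_zero]
    ring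
  | succ s ih =>
    have hshift : ∑ d ∈ range (s + 1), x ^ d * (2 * ((s + 1 - d : ℕ) : R) + 1) =
        ∑ d ∈ range (s + 1), x ^ d * (2 * ((s - d : ℕ) : R) + 1) +
          2 * ∑ d ∈ range (s + 1), x ^ d := by
      rw [mul_sum, ← sum_add_distrib]
      refine sum_congr rfl fun d hd => ?_
      rw [Nat.sub_add_comm (Nat.le_of_lt_succ (mem_range.1 hd))]
      push_cast
      ring
    rw [sum_range_succ, hshift, Nat.sub_self]
    push_cast
    linear_combination ih + 2 * (x - 1) * geom_sum_mul x (s + 1)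

lemma sum_range_pow_mul_tsub_eq {m k s : ℕ} :
    ∑ d ∈ range (k + s + 1), m ^ d * (2 * (k + s - d) + 1 - 2 * k) =
      ∑ d ∈ range (s + 1), m ^ d * (2 * (s - d) + 1) := by
  rw [show k + s + 1 = s + 1 + k by omega, sum_range_add, add_eq_left.2]
  · refine sum_congr rfl fun d hd => ?_
    rw [show 2 * (k + s - d) + 1 - 2 * k = 2 * (s - d) + 1 by rw [mem_range] at hd; omega]
  · refine sum_eq_zero fun d hd => ?_
    rw [show 2 * (k + s - (s + 1 + d)) + 1 - 2 * k = 0 by rw [mem_range] at hd; omega, mul_zero]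

theorem rooted_even_paths_small_depth_general (m k r : ℕ) (hm : 2 ≤ m)
    (hkr : k ≤ r) (hr : r < 2 * k)
    {W : Type} [Fintype W] [DecidableEq W] (G : SimpleGraph W) [DecidableRel G.Adj]
    (ρ : W) (hG : IsPerfectRootedMary m r G ρ) :
    (pathCount G (2 * k) : ℚ) =
      (m : ℚ) ^ (2 * k - 1) *
        ((1 / 2) * ((m : ℚ) + 1) * (((m : ℚ) ^ (r - k + 1) - 1) / ((m : ℚ) - 1)) -
          ((r : ℚ) - (k : ℚ) + 1)) := by
  obtain ⟨s, rfl⟩ := Nat.exists_eq_add_of_le hkr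
  obtain ⟨j, rfl⟩ := Nat.exists_eq_add_of_le' (show 1 ≤ k by omega)
  have hcount : 2 * pathCount G (2 * (j + 1)) =
      (m * m - m) * m ^ (2 * j) * ∑ d ∈ range (s + 1), m ^ d * (2 * (s - d) + 1) := by
    rw [two_mul_pathCount G (by omega), hG.card_filter_dist_eq hr, sum_range_pow_mul_tsub_eq,
      show 2 * (j + 1) - 2 = 2 * j by omega]
  have hcountQ : 2 * (pathCount G (2 * (j + 1)) : ℚ) =
      ((m : ℚ) * m - m) * (m : ℚ) ^ (2 * j) *
        ∑ d ∈ range (s + 1), (m : ℚ) ^ d * (2 * ((s - d : ℕ) : ℚ) + 1) := by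
    have := congrArg (Nat.cast : ℕ → ℚ) hcount
    push_cast [Nat.cast_sub (Nat.le_mul_self m)] at this
    exact this
  have hm1 : (m : ℚ) - 1 ≠ 0 := sub_ne_zero.2 (by exact_mod_cast (by omega : m ≠ 1))
  rw [show 2 * (j + 1) - 1 = 2 * j + 1 by omega, show j + 1 + s - (j + 1) + 1 = s + 1 by omega]
  push_cast
  field_simp
  linear_combination (m - 1 : ℚ) * hcountQ +
    (m : ℚ) ^ (2 * j + 1) * sub_one_sq_mul_sum_range_pow_mul_odd (m : ℚ) s

theorem rooted_even_paths_small_depth (m k r : ℕ) (hm : 2 ≤ m)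
    (hk : 1 ≤ k) (hkr : k ≤ r) (hr : r < 2 * k)
    {W : Type} [Fintype W] [DecidableEq W] (G : SimpleGraph W) [DecidableRel G.Adj]
    (ρ : W) (hG : IsPerfectRootedMary m r G ρ) :
    (pathCount G (2 * k) : ℚ) =
      (m : ℚ) ^ (2 * k - 1) *
        ((1 / 2) * ((m : ℚ) + 1) * (((m : ℚ) ^ (r - k + 1) - 1) / ((m : ℚ) - 1)) -
          ((r : ℚ) - (k : ℚ) + 1)) :=
  rooted_even_paths_small_depth_general m k r hm hkr hr G ρ hG
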